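/- Let 1 < p < ∞, p ≠ 2, and let x, y ∈ ℝ^d. If p > 2 then ‖x+y‖_p^p + ‖x-y‖_p^p ≥ 2(‖x‖_p^p + ‖y‖_p^p), with equality if and only if for every coordinate index i, x_i = 0 or y_i = 0. -/

import Mathlib

/-!
Coordinatewise: for `p ≥ 2` superadditivity of `t ↦ t ^ (p / 2)` gives
`|a| ^ p + |b| ^ p ≤ (a² + b²) ^ (p / 2)`, and its convexity together with the parallelogram law
`a² + b² = ((a + b)² + (a - b)²) / 2` gives `2 (a² + b²) ^ (p / 2) ≤ |a + b| ^ p + |a - b| ^ p`.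
For `p > 2` the first step is strict unless `a = 0` or `b = 0`; summing over the coordinates
gives the inequality and its equality case.
-/

open Finset

namespace Real

lemma add_rpow_lt_rpow_add {a b p : ℝ} (ha : 0 < a) (hb : 0 < b) (hp : 1 < p) :
    a ^ p + b ^ p < (a + b) ^ p := by
  have hab : 0 < a + b := by positivity
  have hp' : 0 < p - 1 := by linarith
  calc a ^ p + b ^ p = a * a ^ (p - 1) + b * b ^ (p - 1) := by
        rw [rpow_sub_one ha.ne', rpow_sub_one hb.ne', mul_div_cancel₀ _ ha.ne',
          mul_div_cancel₀ _ hb.ne']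
    _ < a * (a + b) ^ (p - 1) + b * (a + b) ^ (p - 1) := by
        gcongr <;> linarith
    _ = (a + b) ^ p := by
        rw [← add_mul, rpow_sub_one hab.ne', mul_div_cancel₀ _ hab.ne']

lemma sq_rpow_div_two (c p : ℝ) : (c ^ 2) ^ (p / 2) = |c| ^ p := by
  rw [← sq_abs, ← rpow_natCast_mul (abs_nonneg c)]
  norm_num [mul_div_cancel₀]

lemma abs_rpow_add_abs_rpow_le_sq_add_sq_rpow {p : ℝ} (hp : 2 ≤ p) (a b : ℝ) :
    |a| ^ p + |b| ^ p ≤ (a ^ 2 + b ^ 2) ^ (p / 2) := by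
  rw [← sq_rpow_div_two a, ← sq_rpow_div_two b]
  exact add_rpow_le_rpow_add (sq_nonneg a) (sq_nonneg b) (by linarith)

lemma abs_rpow_add_abs_rpow_lt_sq_add_sq_rpow {p : ℝ} (hp : 2 < p) {a b : ℝ} (ha : a ≠ 0)
    (hb : b ≠ 0) : |a| ^ p + |b| ^ p < (a ^ 2 + b ^ 2) ^ (p / 2) := by
  rw [← sq_rpow_div_two a, ← sq_rpow_div_two b]
  exact add_rpow_lt_rpow_add (by positivity) (by positivity) (by linarith)

lemma two_mul_sq_add_sq_rpow_le {p : ℝ} (hp : 2 ≤ p) (a b : ℝ) :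
    2 * (a ^ 2 + b ^ 2) ^ (p / 2) ≤ |a + b| ^ p + |a - b| ^ p := by
  have hpar : (1 / 2 : ℝ) • (a + b) ^ 2 + (1 / 2 : ℝ) • (a - b) ^ 2 = a ^ 2 + b ^ 2 := by
    simp only [smul_eq_mul]; ring
  have hconv : (a ^ 2 + b ^ 2) ^ (p / 2)
      ≤ (1 / 2 : ℝ) * ((a + b) ^ 2) ^ (p / 2) + (1 / 2 : ℝ) * ((a - b) ^ 2) ^ (p / 2) := by
    rw [← hpar]
    exact (convexOn_rpow (by linarith : (1 : ℝ) ≤ p / 2)).2 (sq_nonneg (a + b))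
      (sq_nonneg (a - b)) (by norm_num) (by norm_num) (by norm_num)
  rw [sq_rpow_div_two, sq_rpow_div_two] at hconv
  linarith

lemma two_mul_abs_rpow_add_abs_rpow_le {p : ℝ} (hp : 2 ≤ p) (a b : ℝ) :
    2 * (|a| ^ p + |b| ^ p) ≤ |a + b| ^ p + |a - b| ^ p := by
  linarith [abs_rpow_add_abs_rpow_le_sq_add_sq_rpow hp a b, two_mul_sq_add_sq_rpow_le hp a b]

lemma abs_rpow_add_add_abs_rpow_sub_eq_iff {p : ℝ} (hp : 2 < p) (a b : ℝ) :
    |a + b| ^ p + |a - b| ^ p = 2 * (|a| ^ p + |b| ^ p) ↔ a = 0 ∨ b = 0 := by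
  constructor
  · intro heq
    by_contra! hab
    linarith [abs_rpow_add_abs_rpow_lt_sq_add_sq_rpow hp hab.1 hab.2,
      two_mul_sq_add_sq_rpow_le hp.le a b]
  · have hp0 : p ≠ 0 := by positivity
    rintro (rfl | rfl) <;> simp [zero_rpow hp0, abs_neg] <;> ring

end Real

lemma two_mul_sum_abs_rpow_add_sum_abs_rpow_le {ι : Type*} (s : Finset ι) {p : ℝ} (hp : 2 ≤ p)
    (x y : ι → ℝ) :
    2 * (∑ i ∈ s, |x i| ^ p + ∑ i ∈ s, |y i| ^ p)
      ≤ ∑ i ∈ s, |x i + y i| ^ p + ∑ i ∈ s, |x i - y i| ^ p := by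
  rw [← sum_add_distrib, mul_sum, ← sum_add_distrib]
  exact sum_le_sum fun i _ ↦ Real.two_mul_abs_rpow_add_abs_rpow_le hp (x i) (y i)

lemma sum_abs_rpow_add_add_sum_abs_rpow_sub_eq_iff {ι : Type*} (s : Finset ι) {p : ℝ}
    (hp : 2 < p) (x y : ι → ℝ) :
    ∑ i ∈ s, |x i + y i| ^ p + ∑ i ∈ s, |x i - y i| ^ p
        = 2 * (∑ i ∈ s, |x i| ^ p + ∑ i ∈ s, |y i| ^ p) ↔ ∀ i ∈ s, x i = 0 ∨ y i = 0 := by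
  rw [← sum_add_distrib, ← sum_add_distrib, mul_sum, eq_comm,
    sum_eq_sum_iff_of_le fun i _ ↦ Real.two_mul_abs_rpow_add_abs_rpow_le hp.le (x i) (y i)]
  exact forall₂_congr fun i _ ↦ eq_comm.trans (Real.abs_rpow_add_add_abs_rpow_sub_eq_iff hp _ _)

theorem clarkson_lp_general (d : ℕ) (p : ℝ) (hp3 : 2 < p)
    (x y : Fin d → ℝ) :
    2 * ((∑ i, |x i| ^ p) + ∑ i, |y i| ^ p) ≤ (∑ i, |x i + y i| ^ p) + ∑ i, |x i - y i| ^ p ∧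
    ((∑ i, |x i + y i| ^ p) + ∑ i, |x i - y i| ^ p
        = 2 * ((∑ i, |x i| ^ p) + ∑ i, |y i| ^ p)
      ↔ ∀ i, x i = 0 ∨ y i = 0) :=
  ⟨two_mul_sum_abs_rpow_add_sum_abs_rpow_le univ hp3.le x y,
    (sum_abs_rpow_add_add_sum_abs_rpow_sub_eq_iff univ hp3 x y).trans (by simp)⟩

/-- Clarkson's inequality for the ℓᵖ norm on ℝᵈ for `p > 2`, with equality iff
`x` and `y` have disjoint supports. Here `‖x‖_p^p = ∑ i, |x i|^p`. -/
theorem clarkson_lp (d : ℕ) (p : ℝ) (hp1 : 1 < p) (hp2 : p ≠ 2) (hp3 : 2 < p)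
    (x y : Fin d → ℝ) :
    2 * ((∑ i, |x i| ^ p) + ∑ i, |y i| ^ p) ≤ (∑ i, |x i + y i| ^ p) + ∑ i, |x i - y i| ^ p ∧
    ((∑ i, |x i + y i| ^ p) + ∑ i, |x i - y i| ^ p
        = 2 * ((∑ i, |x i| ^ p) + ∑ i, |y i| ^ p)
      ↔ ∀ i, x i = 0 ∨ y i = 0) :=
  clarkson_lp_general d p hp3 x y
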